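/- arXiv:2411.17104 — 2 statements merged into one kernel-verified Lean document; each statement's English description precedes it below -/
import Mathlib

section
/- Fix A > 0, c > 0, constants δ₁,…,δₙ ∈ ℝ and σ₁,…,σₙ > 0, and let φ(x) := (½ log(1+|x|²)+1)², L := ½ Σᵢ (σᵢ² ∂²/∂xᵢ² + 2δᵢ ∂/∂xᵢ). Then there exists C > 0 such that, with ψ(t,x) := e^{(A + C(T−t))φ(x)} and t₁ := max(T − A/C, 0), one has −∂_tψ(t,x) − Lψ(t,x) − c(ψ(t,x) + |σ∇ψ(t,x)|) > 0 for all (t,x) ∈ [t₁, T] × ℝⁿ, where σ = diag(σ₁,…,σₙ). -/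
/-!
On `[t₁, T]` the exponent `β = A + C (T - t)` stays in `[A, 2A]`, and `-∂ₜψ = C φ ψ`. Along the
`i`-th coordinate line through `x`, `φ` is `u(s)²` with `u(s) = ½ log (a + s²) + 1` and
`a = 1 + ∑_{j ≠ i} x_j² ≥ 1`; then `u ≥ 1`, `|u'| ≤ 1/2` and `|u''| ≤ 1`, so `|∂ᵢψ| ≤ 2A φψ` and
`∂ᵢᵢψ ≤ (6A + 4A²) φψ`. Together with `ψ ≤ φψ`, this bounds `Lψ + c (ψ + |σ∇ψ|)` by a constant
times `φψ`; taking `C` one larger than that constant leaves the margin `φψ > 0`.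
-/

/-- First partial derivative in the `i`-th coordinate. -/
noncomputable def pd {n : ℕ} (f : (Fin n → ℝ) → ℝ) (i : Fin n) (x : Fin n → ℝ) : ℝ :=
  deriv (fun s => f (Function.update x i s)) (x i)

/-- Second partial derivative in the `i`-th coordinate. -/
noncomputable def pd2 {n : ℕ} (f : (Fin n → ℝ) → ℝ) (i : Fin n) (x : Fin n → ℝ) : ℝ :=
  deriv (fun s => pd f i (Function.update x i s)) (x i)

open Real Function

theorem pd2_eq_deriv_deriv {n : ℕ} (f : (Fin n → ℝ) → ℝ) (i : Fin n) (x : Fin n → ℝ) :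
    pd2 f i x = deriv (deriv fun s => f (update x i s)) (x i) := by
  simp only [pd2, pd, update_idem, update_self]

theorem sum_sq_update {ι : Type*} [Fintype ι] [DecidableEq ι] (x : ι → ℝ) (i : ι) (s : ℝ) :
    ∑ j, update x i s j ^ 2 = ∑ j, x j ^ 2 - x i ^ 2 + s ^ 2 := by
  rw [← Finset.add_sum_erase _ _ (Finset.mem_univ i),
    ← Finset.add_sum_erase _ _ (Finset.mem_univ i),
    Finset.sum_congr rfl fun j hj => by rw [update_of_ne (Finset.ne_of_mem_erase hj)]]
  simp only [update_self]
  ring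

theorem deriv_exp_comp {g g' : ℝ → ℝ} (hg : ∀ s, HasDerivAt g (g' s) s) :
    deriv (fun s => exp (g s)) = fun s => g' s * exp (g s) :=
  funext fun s => ((hg s).exp.deriv).trans (mul_comm _ _)

theorem deriv_deriv_exp_comp {g g' : ℝ → ℝ} {g'' s : ℝ} (hg : ∀ s, HasDerivAt g (g' s) s)
    (hg' : HasDerivAt g' g'' s) :
    deriv (deriv fun s => exp (g s)) s = (g'' + g' s ^ 2) * exp (g s) := by
  have h : HasDerivAt (fun s => g' s * exp (g s)) _ s := hg'.mul (hg s).exp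
  rw [deriv_exp_comp hg, h.deriv]
  ring

noncomputable def logProfile (a s : ℝ) : ℝ := 1 / 2 * log (a + s ^ 2) + 1

section logProfile

variable {a : ℝ}

theorem hasDerivAt_logProfile (ha : 0 < a) (s : ℝ) :
    HasDerivAt (logProfile a) (s / (a + s ^ 2)) s := by
  have hq : a + s ^ 2 ≠ 0 := by positivity
  refine ((((hasDerivAt_pow 2 s).const_add a).log hq).const_mul (1 / 2 : ℝ)).add_const 1
    |>.congr_deriv ?_
  field_simp
  ring

theorem hasDerivAt_div_add_sq (ha : 0 < a) (s : ℝ) :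
    HasDerivAt (fun s => s / (a + s ^ 2)) ((a - s ^ 2) / (a + s ^ 2) ^ 2) s := by
  have hq : a + s ^ 2 ≠ 0 := by positivity
  refine ((hasDerivAt_id' s).div ((hasDerivAt_pow 2 s).const_add a) hq).congr_deriv ?_
  ring

theorem one_le_logProfile (ha : 1 ≤ a) (s : ℝ) : 1 ≤ logProfile a s := by
  have : 0 ≤ log (a + s ^ 2) := log_nonneg (by nlinarith [sq_nonneg s])
  unfold logProfile
  linarith

theorem abs_div_add_sq_le (ha : 1 ≤ a) (s : ℝ) : |s / (a + s ^ 2)| ≤ 1 / 2 := by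
  have hq : 0 < a + s ^ 2 := by positivity
  rw [abs_div, abs_of_pos hq, div_le_iff₀ hq]
  nlinarith [sq_nonneg (|s| - 1), sq_abs s]

theorem abs_sub_sq_div_le (ha : 1 ≤ a) (s : ℝ) : |(a - s ^ 2) / (a + s ^ 2) ^ 2| ≤ 1 := by
  have hq : 1 ≤ a + s ^ 2 := by nlinarith [sq_nonneg s]
  rw [abs_div, abs_of_pos (by positivity : (0 : ℝ) < (a + s ^ 2) ^ 2), div_le_one (by positivity),
    abs_le]
  constructor <;> nlinarith [sq_nonneg s]

theorem hasDerivAt_mul_logProfile_sq (ha : 0 < a) (β s : ℝ) :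
    HasDerivAt (fun s => β * logProfile a s ^ 2) (2 * β * logProfile a s * (s / (a + s ^ 2))) s :=
  (((hasDerivAt_logProfile ha s).pow 2).const_mul β).congr_deriv (by ring)

theorem hasDerivAt_two_mul_logProfile_mul (ha : 0 < a) (β s : ℝ) :
    HasDerivAt (fun s => 2 * β * logProfile a s * (s / (a + s ^ 2)))
      (2 * β * ((s / (a + s ^ 2)) ^ 2 + logProfile a s * ((a - s ^ 2) / (a + s ^ 2) ^ 2))) s :=
  (((hasDerivAt_logProfile ha s).const_mul (2 * β)).mul (hasDerivAt_div_add_sq ha s)).congr_deriv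
    (by ring)

variable {β : ℝ}

theorem abs_deriv_exp_mul_logProfile_sq_le (ha : 1 ≤ a) (hβ : 0 ≤ β) (s : ℝ) :
    |deriv (fun s => exp (β * logProfile a s ^ 2)) s|
      ≤ β * logProfile a s ^ 2 * exp (β * logProfile a s ^ 2) := by
  rw [deriv_exp_comp (hasDerivAt_mul_logProfile_sq (by linarith) β), abs_mul, abs_exp]
  gcongr
  set u := logProfile a s
  have hu : 1 ≤ u := one_le_logProfile ha s
  rw [abs_mul, abs_of_nonneg (by positivity : 0 ≤ 2 * β * u)]
  nlinarith [mul_le_mul_of_nonneg_left (abs_div_add_sq_le ha s) (by positivity : 0 ≤ 2 * β * u),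
    mul_nonneg (mul_nonneg hβ (by linarith : 0 ≤ u)) (by linarith : 0 ≤ u - 1)]

theorem deriv_deriv_exp_mul_logProfile_sq_le (ha : 1 ≤ a) (hβ : 0 ≤ β) (s : ℝ) :
    deriv (deriv fun s => exp (β * logProfile a s ^ 2)) s
      ≤ (3 * β + β ^ 2) * logProfile a s ^ 2 * exp (β * logProfile a s ^ 2) := by
  rw [deriv_deriv_exp_comp (hasDerivAt_mul_logProfile_sq (by linarith) β)
    (hasDerivAt_two_mul_logProfile_mul (by linarith) β s)]
  gcongr
  set u := logProfile a s
  set v := s / (a + s ^ 2)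
  set w := (a - s ^ 2) / (a + s ^ 2) ^ 2
  have hu : 1 ≤ u := one_le_logProfile ha s
  have hv : v ^ 2 ≤ 1 / 4 := by nlinarith [abs_div_add_sq_le ha s, sq_abs v, abs_nonneg v]
  have hw : w ≤ 1 := (le_abs_self w).trans (abs_sub_sq_div_le ha s)
  nlinarith [mul_le_mul_of_nonneg_left hv (by positivity : 0 ≤ 2 * β),
    mul_le_mul_of_nonneg_left hw (by positivity : 0 ≤ 2 * β * u),
    mul_le_mul_of_nonneg_left hv (by positivity : 0 ≤ 4 * β ^ 2 * u ^ 2),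
    mul_nonneg (mul_nonneg hβ (by linarith : 0 ≤ u)) (by linarith : 0 ≤ u - 1),
    mul_nonneg hβ (by linarith : 0 ≤ u - 1)]

end logProfile

section logWeight

variable {ι : Type*} [Fintype ι]

noncomputable def logWeight (x : ι → ℝ) : ℝ := (1 / 2 * log (1 + ∑ i, x i ^ 2) + 1) ^ 2

theorem one_le_logWeight (x : ι → ℝ) : 1 ≤ logWeight x := by
  have : 0 ≤ log (1 + ∑ i, x i ^ 2) := log_nonneg (le_add_of_nonneg_right (by positivity))
  unfold logWeight
  nlinarith

theorem one_le_one_add_sum_sq_sub (x : ι → ℝ) (i : ι) : 1 ≤ 1 + ∑ j, x j ^ 2 - x i ^ 2 := by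
  linarith [Finset.single_le_sum (fun j _ => sq_nonneg (x j)) (Finset.mem_univ i)]

theorem logWeight_update [DecidableEq ι] (x : ι → ℝ) (i : ι) (s : ℝ) :
    logWeight (update x i s) = logProfile (1 + ∑ j, x j ^ 2 - x i ^ 2) s ^ 2 := by
  rw [logWeight, logProfile, sum_sq_update, add_sub_assoc, add_assoc]

end logWeight

section partialDerivatives

variable {n : ℕ} {β : ℝ}

theorem abs_pd_exp_mul_logWeight_le (hβ : 0 ≤ β) (x : Fin n → ℝ) (i : Fin n) :
    |pd (fun y => exp (β * logWeight y)) i x| ≤ β * (logWeight x * exp (β * logWeight x)) := by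
  have h := abs_deriv_exp_mul_logProfile_sq_le (one_le_one_add_sum_sq_sub x i) hβ (x i)
  rw [← logWeight_update, update_eq_self] at h
  simpa only [pd, logWeight_update, mul_assoc] using h

theorem pd2_exp_mul_logWeight_le (hβ : 0 ≤ β) (x : Fin n → ℝ) (i : Fin n) :
    pd2 (fun y => exp (β * logWeight y)) i x
      ≤ (3 * β + β ^ 2) * (logWeight x * exp (β * logWeight x)) := by
  have h := deriv_deriv_exp_mul_logProfile_sq_le (one_le_one_add_sum_sq_sub x i) hβ (x i)
  rw [← logWeight_update, update_eq_self] at h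
  simpa only [pd2_eq_deriv_deriv, logWeight_update, mul_assoc] using h

end partialDerivatives

section sums

variable {ι : Type*} [Fintype ι]

theorem sum_sq_mul_add_two_mul_le (σ δ p q : ι → ℝ) {m m₂ P : ℝ}
    (hp : ∀ i, |p i| ≤ m * P) (hq : ∀ i, q i ≤ m₂ * P) :
    ∑ i, (σ i ^ 2 * q i + 2 * δ i * p i) ≤ (∑ i, (σ i ^ 2 * m₂ + 2 * |δ i| * m)) * P := by
  rw [Finset.sum_mul]
  refine Finset.sum_le_sum fun i _ => ?_
  have hσq := mul_le_mul_of_nonneg_left (hq i) (sq_nonneg (σ i))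
  have hδp := mul_le_mul_of_nonneg_left (hp i) (abs_nonneg (δ i))
  rw [← abs_mul] at hδp
  linarith [le_abs_self (δ i * p i)]

theorem sqrt_sum_mul_sq_le (σ p : ι → ℝ) {M : ℝ} (hM : 0 ≤ M) (hp : ∀ i, |p i| ≤ M) :
    √(∑ i, (σ i * p i) ^ 2) ≤ √(∑ i, σ i ^ 2) * M := by
  rw [← sqrt_sq hM, ← sqrt_mul (Finset.sum_nonneg fun i _ => sq_nonneg (σ i)), Finset.sum_mul]
  gcongr with i
  rw [mul_pow]
  exact mul_le_mul_of_nonneg_left (sq_le_sq' (neg_le_of_abs_le (hp i)) (le_of_abs_le (hp i)))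
    (sq_nonneg _)

noncomputable def barrierRate (A c : ℝ) (δ σ : ι → ℝ) : ℝ :=
  1 / 2 * ∑ i, (σ i ^ 2 * (6 * A + 4 * A ^ 2) + 2 * |δ i| * (2 * A))
    + c * (1 + √(∑ i, σ i ^ 2) * (2 * A)) + 1

theorem barrierRate_pos {A c : ℝ} (hA : 0 ≤ A) (hc : 0 ≤ c) (δ σ : ι → ℝ) :
    0 < barrierRate A c δ σ := by
  unfold barrierRate
  positivity

theorem barrier_defect_pos {A c P Ψ : ℝ} {δ σ p q : ι → ℝ} (hA : 0 ≤ A) (hc : 0 ≤ c) (hP : 0 < P)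
    (hΨ : Ψ ≤ P) (hp : ∀ i, |p i| ≤ 2 * A * P) (hq : ∀ i, q i ≤ (6 * A + 4 * A ^ 2) * P) :
    0 < barrierRate A c δ σ * P - 1 / 2 * ∑ i, (σ i ^ 2 * q i + 2 * δ i * p i)
      - c * (Ψ + √(∑ i, (σ i * p i) ^ 2)) := by
  have hL := sum_sq_mul_add_two_mul_le σ δ p q hp hq
  have hS := sqrt_sum_mul_sq_le σ p (by positivity) hp
  have hcS := mul_le_mul_of_nonneg_left (add_le_add hΨ hS) hc
  unfold barrierRate
  linarith

end sums

theorem add_mul_sub_le_two_mul {A C T t : ℝ} (hC : 0 < C) (ht : T - A / C ≤ t) :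
    A + C * (T - t) ≤ 2 * A := by
  rw [sub_le_comm, le_div_iff₀' hC] at ht
  linarith

theorem deriv_exp_add_mul_sub_mul (A C T w t : ℝ) :
    deriv (fun s => exp ((A + C * (T - s)) * w)) t
      = -(C * (w * exp ((A + C * (T - t)) * w))) := by
  have h : HasDerivAt (fun s => (A + C * (T - s)) * w) (-(C * w)) t :=
    (((((hasDerivAt_id' t).const_sub T).const_mul C).const_add A).mul_const w).congr_deriv
      (by ring)
  exact h.exp.deriv.trans (by ring)

theorem strict_supersolution_barrier_general (n : ℕ) (T A c : ℝ) (δ σ : Fin n → ℝ)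
    (hA : 0 < A) (hc : 0 < c) :
    ∃ C > 0,
      ∀ t : ℝ, ∀ x : Fin n → ℝ, max (T - A / C) 0 ≤ t → t ≤ T →
        (letI φ : (Fin n → ℝ) → ℝ :=
            fun y => ((1 / 2) * Real.log (1 + ∑ i, y i ^ 2) + 1) ^ 2
         letI ψ : ℝ → (Fin n → ℝ) → ℝ :=
            fun s y => Real.exp ((A + C * (T - s)) * φ y)
         0 < -(deriv (fun s => ψ s x) t)
            - (1 / 2) * ∑ i, (σ i ^ 2 * pd2 (ψ t) i x + 2 * δ i * pd (ψ t) i x)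
            - c * (ψ t x + Real.sqrt (∑ i, (σ i * pd (ψ t) i x) ^ 2))) := by
  have hC := barrierRate_pos hA.le hc.le δ σ
  refine ⟨barrierRate A c δ σ, hC, fun t x ht₁ htT => ?_⟩
  set C := barrierRate A c δ σ
  set ψ : ℝ → (Fin n → ℝ) → ℝ := fun s y => exp ((A + C * (T - s)) * logWeight y)
  change 0 < -deriv (fun s => ψ s x) t
    - 1 / 2 * ∑ i, (σ i ^ 2 * pd2 (ψ t) i x + 2 * δ i * pd (ψ t) i x)
    - c * (ψ t x + √(∑ i, (σ i * pd (ψ t) i x) ^ 2))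
  have hAβ : A ≤ A + C * (T - t) := le_add_of_nonneg_right (mul_nonneg hC.le (sub_nonneg.2 htT))
  have hβA := add_mul_sub_le_two_mul hC (le_of_max_le_left ht₁)
  have hφ := one_le_logWeight x
  have hP : 0 < logWeight x * ψ t x := mul_pos (zero_lt_one.trans_le hφ) (exp_pos _)
  rw [deriv_exp_add_mul_sub_mul, neg_neg]
  refine barrier_defect_pos hA.le hc.le hP (le_mul_of_one_le_left (exp_pos _).le hφ)
    (fun i => ?_) (fun i => ?_)
  · exact (abs_pd_exp_mul_logWeight_le (by linarith) x i).trans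
      (mul_le_mul_of_nonneg_right hβA hP.le)
  · exact (pd2_exp_mul_logWeight_le (by linarith) x i).trans
      (mul_le_mul_of_nonneg_right (by nlinarith) hP.le)

theorem strict_supersolution_barrier (n : ℕ) (T A c : ℝ) (δ σ : Fin n → ℝ)
    (hT : 0 < T) (hA : 0 < A) (hc : 0 < c) (hσ : ∀ i, 0 < σ i) :
    ∃ C > 0,
      ∀ t : ℝ, ∀ x : Fin n → ℝ, max (T - A / C) 0 ≤ t → t ≤ T →
        (letI φ : (Fin n → ℝ) → ℝ :=
            fun y => ((1 / 2) * Real.log (1 + ∑ i, y i ^ 2) + 1) ^ 2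
         letI ψ : ℝ → (Fin n → ℝ) → ℝ :=
            fun s y => Real.exp ((A + C * (T - s)) * φ y)
         0 < -(deriv (fun s => ψ s x) t)
            - (1 / 2) * ∑ i, (σ i ^ 2 * pd2 (ψ t) i x + 2 * δ i * pd (ψ t) i x)
            - c * (ψ t x + Real.sqrt (∑ i, (σ i * pd (ψ t) i x) ^ 2))) :=
  strict_supersolution_barrier_general n T A c δ σ hA hc
end

section
/- Let Π := {x ∈ ℝⁿ : xₙ < x_{n−1} < ⋯ < x₁} and, for α > 0, Π_α := {x ∈ Π : dist(x, ∂Π) ≥ α}. Then Π_α = {x ∈ ℝⁿ : x_{k+1} ≤ x_k − √2·α for all k = 1, …, n−1}, i.e., a point of Π is at distance at least α from the boundary of Π if and only if each pair of consecutive ordered coordinates differs by at least √2·α. -/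
/-!
For `x ∈ Π` the distance to `∂Π` equals the distance to the complement of `Π`. A point `y ∉ Π`
has a consecutive pair with `y k ≤ y (k + 1)`; pairing `x - y` with `e_k - e_{k+1}`, a vector of
norm `√2`, gives `x k - x (k + 1) ≤ √2 · dist x y`. Conversely, replacing `x k` and `x (k + 1)` by
their mean yields a point outside `Π` at distance exactly `(x k - x (k + 1)) / √2`.
-/

open Metric Set

theorem Metric.infDist_frontier_eq_infDist_compl {E : Type*} [NormedAddCommGroup E]
    [NormedSpace ℝ E] [FiniteDimensional ℝ E] {x : E} {s : Set E} (hx : x ∈ s) (hs : s ≠ univ) :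
    infDist x (frontier s) = infDist x sᶜ := by
  obtain ⟨y, hy, hxy⟩ := exists_mem_frontier_infDist_compl_eq_dist hx hs
  refine le_antisymm (hxy ▸ infDist_le_dist_of_mem hy) ?_
  rw [← infDist_closure (s := sᶜ)]
  exact infDist_le_infDist_of_subset (frontier_compl s ▸ frontier_subset_closure) ⟨y, hy⟩

theorem strictAnti_iff_forall_apply_succ_lt {β : Type*} [Preorder β] {n : ℕ} (f : Fin n → β) :
    StrictAnti f ↔ ∀ i : Fin (n - 1),
      f ⟨i.val + 1, by have := i.isLt; omega⟩ < f ⟨i.val, by have := i.isLt; omega⟩ := by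
  rw [strictAnti_iff_forall_covBy]
  constructor
  · intro h i
    exact h _ _ (by simp)
  · intro h a b hab
    rw [Fin.covBy_iff, Nat.covBy_iff_add_one_eq] at hab
    simpa only [hab] using h ⟨a, by omega⟩

namespace EuclideanSpace

variable {ι : Type*} [Fintype ι] [DecidableEq ι]

theorem inner_single_one_sub_single_one (x : EuclideanSpace ℝ ι) (a b : ι) :
    inner ℝ x (single a (1 : ℝ) - single b 1) = x a - x b := by
  simp [inner_sub_right, inner_single_right]

theorem norm_single_one_sub_single_one {a b : ι} (hab : a ≠ b) :
    ‖single a (1 : ℝ) - single b 1‖ = √2 := by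
  rw [← Real.sqrt_sq (norm_nonneg _), ← real_inner_self_eq_norm_sq,
    inner_single_one_sub_single_one]
  simp [hab, hab.symm]
  norm_num

theorem apply_sub_apply_sub_le_sqrt_two_mul_dist {a b : ι} (hab : a ≠ b)
    (x y : EuclideanSpace ℝ ι) : (x a - x b) - (y a - y b) ≤ √2 * dist x y :=
  calc (x a - x b) - (y a - y b) = inner ℝ (x - y) (single a (1 : ℝ) - single b 1) := by
        rw [inner_single_one_sub_single_one, PiLp.sub_apply, PiLp.sub_apply]; ring
    _ ≤ ‖x - y‖ * ‖single a (1 : ℝ) - single b 1‖ := real_inner_le_norm _ _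
    _ = √2 * dist x y := by rw [norm_single_one_sub_single_one hab, dist_eq_norm, mul_comm]

theorem exists_apply_eq_apply_sqrt_two_mul_dist_eq {a b : ι} (hab : a ≠ b)
    (x : EuclideanSpace ℝ ι) :
    ∃ z : EuclideanSpace ℝ ι, z a = z b ∧ √2 * dist x z = |x a - x b| := by
  refine ⟨x - ((x a - x b) / 2) • (single a 1 - single b 1), ?_, ?_⟩
  · simp [hab, hab.symm]
    ring
  · rw [dist_eq_norm, sub_sub_cancel, norm_smul, norm_single_one_sub_single_one hab,
      Real.norm_eq_abs, abs_div, abs_two]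
    linear_combination (|x a - x b| / 2) * Real.mul_self_sqrt zero_le_two

end EuclideanSpace

theorem weyl_chamber_dist_characterization (n : ℕ) (hn : 2 ≤ n) (α : ℝ) (hα : 0 < α) :
    {x : EuclideanSpace ℝ (Fin n) |
        StrictAnti x ∧
          α ≤ Metric.infDist x (frontier {y : EuclideanSpace ℝ (Fin n) | StrictAnti y})} =
      {x : EuclideanSpace ℝ (Fin n) |
        ∀ i : Fin (n - 1),
          x ⟨i.val + 1, by have := i.isLt; omega⟩ ≤
            x ⟨i.val, by have := i.isLt; omega⟩ - Real.sqrt 2 * α} := by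
  have hne : {y : EuclideanSpace ℝ (Fin n) | StrictAnti y}ᶜ.Nonempty :=
    ⟨0, fun h => (h (Fin.lt_def.2 (by simp) : (⟨0, by omega⟩ : Fin n) < ⟨1, by omega⟩)).false⟩
  have hsqrt2 : 0 < √2 := Real.sqrt_pos.2 two_pos
  ext x
  constructor
  · rintro ⟨hx, hαx⟩ i
    have hab : (⟨i.val, by omega⟩ : Fin n) < ⟨i.val + 1, by omega⟩ := Fin.lt_def.2 (by simp)
    obtain ⟨z, hz, hxz⟩ := EuclideanSpace.exists_apply_eq_apply_sqrt_two_mul_dist_eq hab.ne x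
    have hz_compl : z ∈ {y : EuclideanSpace ℝ (Fin n) | StrictAnti y}ᶜ :=
      fun h => (hz ▸ h hab).false
    rw [infDist_frontier_eq_infDist_compl hx (nonempty_compl.1 hne)] at hαx
    rw [abs_of_pos (sub_pos.2 (hx hab))] at hxz
    have := mul_le_mul_of_nonneg_left (hαx.trans (infDist_le_dist_of_mem hz_compl)) hsqrt2.le
    linarith
  · intro hgap
    have hx : StrictAnti x := (strictAnti_iff_forall_apply_succ_lt x).2 fun i => by
      linarith [hgap i, mul_pos hsqrt2 hα]
    refine ⟨hx, ?_⟩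
    rw [infDist_frontier_eq_infDist_compl hx (nonempty_compl.1 hne), le_infDist hne]
    intro y hy
    obtain ⟨i, hi⟩ := by simpa [strictAnti_iff_forall_apply_succ_lt] using hy
    have hdist := EuclideanSpace.apply_sub_apply_sub_le_sqrt_two_mul_dist
      (a := ⟨i.val, by omega⟩) (b := ⟨i.val + 1, by omega⟩) (by simp [Fin.ext_iff]) x y
    exact le_of_mul_le_mul_left (by linarith [hgap i]) hsqrt2
end
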